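/- arXiv:2205.14016 — 6 statements merged into one kernel-verified Lean document; each statement's English description precedes it below -/
import Mathlib

section
/- Fix a constant C > 0 and define g(τ) = ∫_{τ-C}^∞ e^{-t²/2} dt and h(τ) = ∫_τ^∞ e^{-t²/2} dt. Then the ratio f(τ) = g(τ)/h(τ) is strictly increasing in τ on ℝ. -/
/-!
Write `Q a = ∫_a^∞ φ` with `φ t = exp (-t²/2)`, so `Q' = -φ`. The derivative of
`Q (τ - C) / Q τ` has the sign of `φ τ · Q (τ - C) - φ (τ - C) · Q τ`. Substituting `t = s + C`
in `Q τ` writes both terms as integrals over `s > τ - C`, and there the integrands compare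
pointwise: `φ (τ - C) φ (s + C) < φ τ φ s`, since the exponents differ by `C (s - τ + C) > 0`.
-/

open Real MeasureTheory Set

theorem setIntegral_lt_setIntegral_of_forall_lt {X : Type*} [MeasurableSpace X] {μ : Measure X}
    {s : Set X} {f g : X → ℝ} (hs : MeasurableSet s) (hμs : μ s ≠ 0)
    (hf : IntegrableOn f s μ) (hg : IntegrableOn g s μ) (hlt : ∀ x ∈ s, f x < g x) :
    ∫ x in s, f x ∂μ < ∫ x in s, g x ∂μ := by
  rw [← sub_pos, ← integral_sub hg hf, setIntegral_pos_iff_support_of_nonneg_ae]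
  · have hsupp : s ⊆ Function.support fun x => g x - f x := fun x hx =>
      sub_ne_zero.mpr (hlt x hx).ne'
    rwa [inter_eq_right.mpr hsupp, pos_iff_ne_zero]
  · exact (ae_restrict_iff' hs).mpr (ae_of_all _ fun x hx => sub_nonneg.mpr (hlt x hx).le)
  · exact hg.sub hf

theorem setIntegral_Ioi_comp_add_right {E : Type*} [NormedAddCommGroup E] [NormedSpace ℝ E]
    (f : ℝ → E) (a c : ℝ) :
    ∫ x in Ioi (a - c), f (x + c) = ∫ x in Ioi a, f x := by
  have hpre : (· + c) ⁻¹' Ioi a = Ioi (a - c) := by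
    ext x; simp [sub_lt_iff_lt_add]
  rw [← hpre]
  exact (measurePreserving_add_right volume c).setIntegral_preimage_emb
    (MeasurableEquiv.addRight c).measurableEmbedding f (Ioi a)

theorem hasDerivAt_setIntegral_Ioi {E : Type*} [NormedAddCommGroup E] [NormedSpace ℝ E]
    [CompleteSpace E] {f : ℝ → E} {a : ℝ} (hf : Integrable f) (hfa : ContinuousAt f a) :
    HasDerivAt (fun x => ∫ t in Ioi x, f t) (-f a) a := by
  have hsplit : (fun x => ∫ t in Ioi x, f t) = fun x => (∫ t in Ioi 0, f t) - ∫ t in 0..x, f t :=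
    funext fun x => by
      rw [← intervalIntegral.integral_Ioi_sub_Ioi' hf.integrableOn hf.integrableOn, sub_sub_cancel]
  rw [hsplit, ← zero_sub]
  exact (hasDerivAt_const a _).sub (intervalIntegral.integral_hasDerivAt_right hf.intervalIntegrable
    hf.aestronglyMeasurable.stronglyMeasurableAtFilter hfa)

theorem integrable_exp_neg_sq_half : Integrable fun t : ℝ => exp (-t ^ 2 / 2) := by
  convert integrable_exp_neg_mul_sq (b := 1 / 2) (by norm_num) using 2 with t
  ring_nf

noncomputable def gaussTail (a : ℝ) : ℝ := ∫ t in Ioi a, exp (-t ^ 2 / 2)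

theorem gaussTail_pos (a : ℝ) : 0 < gaussTail a := by
  simpa [gaussTail] using setIntegral_lt_setIntegral_of_forall_lt (measurableSet_Ioi (a := a))
    (by simp) (integrable_zero _ _ _).integrableOn integrable_exp_neg_sq_half.integrableOn
    fun t _ => exp_pos (-t ^ 2 / 2)

theorem hasDerivAt_gaussTail (a : ℝ) : HasDerivAt gaussTail (-exp (-a ^ 2 / 2)) a :=
  hasDerivAt_setIntegral_Ioi integrable_exp_neg_sq_half (by fun_prop)

theorem exp_neg_sq_half_shift_mul_lt {a s C : ℝ} (hC : 0 < C) (hs : a - C < s) :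
    exp (-(a - C) ^ 2 / 2) * exp (-(s + C) ^ 2 / 2) < exp (-a ^ 2 / 2) * exp (-s ^ 2 / 2) := by
  rw [← exp_add, ← exp_add, exp_lt_exp]
  nlinarith

theorem exp_mul_gaussTail_lt {C : ℝ} (hC : 0 < C) (a : ℝ) :
    exp (-(a - C) ^ 2 / 2) * gaussTail a < exp (-a ^ 2 / 2) * gaussTail (a - C) := by
  have hshift := integrable_exp_neg_sq_half.comp_add_right C
  simp only [gaussTail, ← setIntegral_Ioi_comp_add_right (fun t => exp (-t ^ 2 / 2)) a C,
    ← integral_const_mul]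
  exact setIntegral_lt_setIntegral_of_forall_lt measurableSet_Ioi (by simp)
    (hshift.const_mul _).integrableOn (integrable_exp_neg_sq_half.const_mul _).integrableOn
    fun s hs => exp_neg_sq_half_shift_mul_lt hC hs

theorem shifted_tail_ratio_strictMono (C : ℝ) (hC : 0 < C) :
    StrictMono (fun τ : ℝ =>
      (∫ t in Set.Ioi (τ - C), Real.exp (-t ^ 2 / 2)) /
      (∫ t in Set.Ioi τ, Real.exp (-t ^ 2 / 2))) := by
  change StrictMono fun τ => gaussTail (τ - C) / gaussTail τ
  refine strictMono_of_deriv_pos fun τ => ?_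
  have hratio : HasDerivAt (fun τ => gaussTail (τ - C) / gaussTail τ) _ τ :=
    ((hasDerivAt_gaussTail (τ - C)).comp_sub_const τ C).div (hasDerivAt_gaussTail τ)
      (gaussTail_pos τ).ne'
  rw [hratio.deriv]
  have hkey := exp_mul_gaussTail_lt hC τ
  exact div_pos (by linarith) (pow_pos (gaussTail_pos τ) 2)
end

section
/- For 0 < α < γ < 1 and n ≥ 1 a positive integer, the likelihood ratio (1-(1-γ)^n)/(1-(1-α)^n) is strictly greater than 1 and is strictly decreasing in n. -/
/-!
Write `a = 1 - γ < b = 1 - α` and `Sₙ(x) = ∑_{k<n} xᵏ`, so that `1 - xⁿ = (1 - x) Sₙ(x)` and the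
ratio is `(1 - a) / (1 - b) · Sₙ(a) / Sₙ(b)`. Since `Sₙ₊₁(x) = Sₙ(x) + xⁿ`, the ratio decreases
exactly when `aⁿ Sₙ(b) < bⁿ Sₙ(a)`, which holds term by term: `aⁿ bᵏ < bⁿ aᵏ` for `k < n`.
-/

open Finset

theorem pow_mul_geom_sum_lt_pow_mul_geom_sum {R : Type*} [CommSemiring R] [LinearOrder R]
    [IsStrictOrderedRing R] {a b : R} (ha : 0 < a) (hab : a < b) {n : ℕ} (hn : n ≠ 0) :
    a ^ n * ∑ k ∈ range n, b ^ k < b ^ n * ∑ k ∈ range n, a ^ k := by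
  rw [mul_sum, mul_sum]
  refine sum_lt_sum_of_nonempty (nonempty_range_iff.2 hn) fun k hk => ?_
  obtain ⟨j, rfl⟩ := Nat.exists_eq_add_of_lt (mem_range.1 hk)
  have hpow : a ^ (j + 1) < b ^ (j + 1) := pow_lt_pow_left₀ hab ha.le j.succ_ne_zero
  have hpos : 0 < a ^ k * b ^ k := mul_pos (pow_pos ha k) (pow_pos (ha.trans hab) k)
  calc a ^ (k + j + 1) * b ^ k = a ^ k * b ^ k * a ^ (j + 1) := by ring
    _ < a ^ k * b ^ k * b ^ (j + 1) := mul_lt_mul_of_pos_left hpow hpos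
    _ = b ^ (k + j + 1) * a ^ k := by ring

theorem geom_sum_div_geom_sum_succ_lt {a b : ℝ} (ha : 0 < a) (hab : a < b) {n : ℕ}
    (hn : n ≠ 0) :
    (∑ k ∈ range (n + 1), a ^ k) / ∑ k ∈ range (n + 1), b ^ k <
      (∑ k ∈ range n, a ^ k) / ∑ k ∈ range n, b ^ k := by
  have hb : 0 < b := ha.trans hab
  rw [div_lt_div_iff₀ (geom_sum_pos hb.le n.succ_ne_zero) (geom_sum_pos hb.le hn),
    sum_range_succ, sum_range_succ]
  linear_combination pow_mul_geom_sum_lt_pow_mul_geom_sum ha hab hn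

theorem one_lt_one_sub_pow_div_one_sub_pow {a b : ℝ} (ha : 0 ≤ a) (hab : a < b) (hb : b < 1)
    {n : ℕ} (hn : n ≠ 0) : 1 < (1 - a ^ n) / (1 - b ^ n) := by
  have hbn : b ^ n < 1 := pow_lt_one₀ (ha.trans hab.le) hb hn
  rw [one_lt_div (sub_pos.2 hbn)]
  linarith [pow_lt_pow_left₀ hab ha hn]

theorem one_sub_pow_div_one_sub_pow_succ_lt {a b : ℝ} (ha : 0 < a) (hab : a < b) (hb : b < 1)
    {n : ℕ} (hn : n ≠ 0) :
    (1 - a ^ (n + 1)) / (1 - b ^ (n + 1)) < (1 - a ^ n) / (1 - b ^ n) := by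
  simp only [← mul_neg_geom_sum, mul_div_mul_comm]
  have hfactor : 0 < (1 - a) / (1 - b) := div_pos (by linarith) (by linarith)
  exact mul_lt_mul_of_pos_left (geom_sum_div_geom_sum_succ_lt ha hab hn) hfactor

theorem atLeastOne_likelihood_ratio (α γ : ℝ) (hα : 0 < α) (hαγ : α < γ) (hγ : γ < 1)
    (n : ℕ) (hn : 1 ≤ n) :
    1 < (1 - (1 - γ) ^ n) / (1 - (1 - α) ^ n) ∧
    (1 - (1 - γ) ^ (n + 1)) / (1 - (1 - α) ^ (n + 1)) <
      (1 - (1 - γ) ^ n) / (1 - (1 - α) ^ n) := by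
  have ha : 0 < 1 - γ := by linarith
  have hab : 1 - γ < 1 - α := by linarith
  have hb : 1 - α < 1 := by linarith
  have hn0 : n ≠ 0 := Nat.one_le_iff_ne_zero.1 hn
  exact ⟨one_lt_one_sub_pow_div_one_sub_pow ha.le hab hb hn0,
    one_sub_pow_div_one_sub_pow_succ_lt ha hab hb hn0⟩
end

section
/- Let κ, β, c_w > 0 and 0 < α_w < γ_w < 1, 0 < α_S < γ_S < 1 with γ_S/α_S > γ_w/α_w. Define the likelihood ratio L(j,k) = (γ_w/α_w)^j (γ_S/α_S)^k ((β + α_S + c_w α_w)/(β + γ_S + c_w γ_w))^{j+k+κ}. Then L(j+1,k) < L(j,k) for all nonnegative integers j, k if and only if β < (γ_S α_w - γ_w α_S)/(γ_w - α_w). -/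
/-! Going from `(j, k)` to `(j + 1, k)` multiplies `L(j, k)` by the same factor
`(γ_w / α_w) · r`, where `r` is the base of the real power, whatever `j` and `k` are.
So `L` decreases in `j` exactly when this factor is below `1`, and clearing denominators
turns that into an inequality linear in `β`. -/

open Real

theorem pow_mul_rpow_succ_lt_iff {x y r κ : ℝ} (hx : 0 < x) (hy : 0 < y) (hr : 0 < r)
    (j k : ℕ) :
    x ^ (j + 1) * y ^ k * r ^ ((j : ℝ) + 1 + k + κ) < x ^ j * y ^ k * r ^ ((j : ℝ) + k + κ) ↔
      x * r < 1 := by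
  have hfactor : 0 < x ^ j * y ^ k * r ^ ((j : ℝ) + k + κ) := by positivity
  have hsucc : r ^ ((j : ℝ) + 1 + k + κ) = r ^ ((j : ℝ) + k + κ) * r := by
    rw [show (j : ℝ) + 1 + k + κ = (j : ℝ) + k + κ + 1 by ring, rpow_add_one hr.ne']
  rw [hsucc, pow_succ,
    show x ^ j * x * y ^ k * (r ^ ((j : ℝ) + k + κ) * r)
      = x * r * (x ^ j * y ^ k * r ^ ((j : ℝ) + k + κ)) by ring]
  exact mul_lt_iff_lt_one_left hfactor

theorem ratio_mul_lt_one_iff {β cw αw γw αS γS : ℝ} (hαw : 0 < αw) (hwγ : αw < γw)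
    (hden : 0 < β + γS + cw * γw) :
    γw / αw * ((β + αS + cw * αw) / (β + γS + cw * γw)) < 1 ↔
      β < (γS * αw - γw * αS) / (γw - αw) := by
  rw [div_mul_div_comm, div_lt_one (by positivity), lt_div_iff₀ (sub_pos.mpr hwγ)]
  constructor <;> intro h <;> linarith

theorem improvable_evidence_iff_general (κ β cw αw γw αS γS : ℝ) (hβ : 0 < β)
    (hcw : 0 < cw) (hαw : 0 < αw) (hwγ : αw < γw)
    (hαS : 0 < αS) (hSγ : αS < γS) :
    (∀ j k : ℕ,
      (γw / αw) ^ (j+1) * (γS / αS) ^ k *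
        ((β + αS + cw * αw) / (β + γS + cw * γw)) ^ ((j:ℝ) + 1 + k + κ) <
      (γw / αw) ^ j * (γS / αS) ^ k *
        ((β + αS + cw * αw) / (β + γS + cw * γw)) ^ ((j:ℝ) + k + κ))
    ↔ β < (γS * αw - γw * αS) / (γw - αw) := by
  have hγw : 0 < γw := hαw.trans hwγ
  have hγS : 0 < γS := hαS.trans hSγ
  have hden : 0 < β + γS + cw * γw := by positivity
  have hr : 0 < (β + αS + cw * αw) / (β + γS + cw * γw) := by positivity
  have hstep := pow_mul_rpow_succ_lt_iff (κ := κ) (div_pos hγw hαw) (div_pos hγS hαS) hr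
  rw [← ratio_mul_lt_one_iff hαw hwγ hden]
  exact ⟨fun h => (hstep 0 0).mp (h 0 0), fun h j k => (hstep j k).mpr h⟩

theorem improvable_evidence_iff (κ β cw αw γw αS γS : ℝ) (hκ : 0 < κ) (hβ : 0 < β)
    (hcw : 0 < cw) (hαw : 0 < αw) (hwγ : αw < γw) (hγw1 : γw < 1)
    (hαS : 0 < αS) (hSγ : αS < γS) (hγS1 : γS < 1)
    (hstr : γw / αw < γS / αS) :
    (∀ j k : ℕ,
      (γw / αw) ^ (j+1) * (γS / αS) ^ k *
        ((β + αS + cw * αw) / (β + γS + cw * γw)) ^ ((j:ℝ) + 1 + k + κ) <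
      (γw / αw) ^ j * (γS / αS) ^ k *
        ((β + αS + cw * αw) / (β + γS + cw * γw)) ^ ((j:ℝ) + k + κ))
    ↔ β < (γS * αw - γw * αS) / (γw - αw) :=
  improvable_evidence_iff_general κ β cw αw γw αS γS hβ hcw hαw hwγ hαS hSγ
end

section
/- Under the conditions 0 < α_w < γ_w, 0 < α_S < γ_S, γ_S/α_S > γ_w/α_w > 1, c_w > 0, and 0 < β < (γ_S α_w - γ_w α_S)/(γ_w - α_w), the interest-I observation framework with Gamma(κ, β) prior (κ > 0) satisfies: for all j, k ≥ 0 and any prior 0 < P(H) < 1, the posterior probability P(H | O_{j+1,k}) < P(H | O_{j,k}). -/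
/-!
Integrating out the Gamma-distributed interest level gives each likelihood in closed form, and one
more weak success multiplies it by `cw (κ + j + k) / (j + 1)` times `pw / (β + pS + cw pw)`. The
first factor is the same under `H` and `¬H`; the bound on `β` is exactly what makes the second one
smaller under `H` (`γw, γS`) than under `¬H` (`αw, αS`). So the likelihood ratio, and with it
the posterior, drops.
-/

open Real MeasureTheory

/-- Probability of observing exactly `j` weak and `k` strong successes, in the
interest-`I` observation framework with a `Gamma(κ, β)` interest prior, where
weak and strong studies are attempted at Poisson rates `cw * I` and `I` and each
succeeds with probabilities `pw` (weak) and `pS` (strong): the interest level is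
integrated against the Gamma density, and by Poisson thinning the numbers of
weak and strong successes are independent Poissons of means `cw * pw * I` and
`pS * I`. -/
noncomputable def obsProb (κ β cw pw pS : ℝ) (j k : ℕ) : ℝ :=
  ∫ I in Set.Ioi (0:ℝ),
    (β ^ κ / Real.Gamma κ) * I ^ (κ - 1) * Real.exp (-(β * I)) *
    (Real.exp (-(pS * I)) * (pS * I) ^ k / k.factorial) *
    (Real.exp (-(cw * pw * I)) * (cw * pw * I) ^ j / j.factorial)

section obsProb

variable {κ β cw pw pS : ℝ}

lemma obsProb_eq (hκ : 0 < κ) (hr : 0 < β + pS + cw * pw) (j k : ℕ) :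
    obsProb κ β cw pw pS j k =
      β ^ κ / Gamma κ * (pS ^ k / k.factorial) * ((cw * pw) ^ j / j.factorial) *
        ((1 / (β + pS + cw * pw)) ^ (κ + (j + k : ℕ)) * Gamma (κ + (j + k : ℕ))) := by
  have hintegrand : ∀ I ∈ Set.Ioi (0:ℝ),
      β ^ κ / Gamma κ * I ^ (κ - 1) * exp (-(β * I)) *
        (exp (-(pS * I)) * (pS * I) ^ k / k.factorial) *
        (exp (-(cw * pw * I)) * (cw * pw * I) ^ j / j.factorial) =
      β ^ κ / Gamma κ * (pS ^ k / k.factorial) * ((cw * pw) ^ j / j.factorial) *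
        (I ^ (κ + (j + k : ℕ) - 1) * exp (-((β + pS + cw * pw) * I))) := by
    intro I (hI : 0 < I)
    rw [show κ + ((j + k : ℕ) : ℝ) - 1 = κ - 1 + (j + k : ℕ) by ring, rpow_add hI, rpow_natCast,
      show -((β + pS + cw * pw) * I) = -(β * I) + (-(pS * I) + -(cw * pw * I)) by ring,
      exp_add, exp_add]
    ring
  rw [obsProb, setIntegral_congr_fun measurableSet_Ioi hintegrand, integral_const_mul,
    integral_rpow_mul_exp_neg_mul_Ioi (by positivity) hr]

lemma obsProb_pos (hκ : 0 < κ) (hβ : 0 < β) (hw : 0 < cw * pw) (hS : 0 < pS) (j k : ℕ) :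
    0 < obsProb κ β cw pw pS j k := by
  rw [obsProb_eq hκ (by positivity)]
  have := Gamma_pos_of_pos hκ
  have := Gamma_pos_of_pos (show 0 < κ + (j + k : ℕ) by positivity)
  positivity

lemma obsProb_succ_left (hκ : 0 < κ) (hr : 0 < β + pS + cw * pw) (j k : ℕ) :
    obsProb κ β cw pw pS (j + 1) k =
      obsProb κ β cw pw pS j k * (cw * (κ + (j + k : ℕ)) / (j + 1)) *
        (pw / (β + pS + cw * pw)) := by
  have hs : 0 < κ + (j + k : ℕ) := by positivity
  rw [obsProb_eq hκ hr, obsProb_eq hκ hr, show j + 1 + k = j + k + 1 by ring, Nat.cast_succ,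
    ← add_assoc, rpow_add_one (by positivity), Gamma_add_one hs.ne', Nat.factorial_succ]
  push_cast
  field_simp
  ring

end obsProb

lemma weak_success_factor_lt {β cw αw γw αS γS : ℝ} (hcw : 0 < cw) (hαw : 0 < αw)
    (hwγ : αw < γw) (hαS : 0 < αS) (hSγ : αS < γS) (hβ : 0 < β)
    (hβlt : β < (γS * αw - γw * αS) / (γw - αw)) :
    γw / (β + γS + cw * γw) < αw / (β + αS + cw * αw) := by
  have hβlt' : β * (γw - αw) < γS * αw - γw * αS := (lt_div_iff₀ (by linarith)).mp hβlt
  rw [div_lt_div_iff₀ (by nlinarith) (by positivity)]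
  linarith

lemma posterior_lt_of_mul_lt {p a b a' b' : ℝ} (hp0 : 0 < p) (hp1 : p < 1) (ha : 0 < a)
    (hb : 0 < b) (ha' : 0 < a') (hb' : 0 < b') (h : a * b' < a' * b) :
    p * a / (p * a + (1 - p) * b) < p * a' / (p * a' + (1 - p) * b') := by
  have hq : 0 < 1 - p := by linarith
  rw [div_lt_div_iff₀ (by positivity) (by positivity)]
  nlinarith [mul_pos hp0 hq]

theorem improvable_evidence_paradox_general (κ β cw αw γw αS γS pH : ℝ)
    (hκ : 0 < κ) (hcw : 0 < cw)
    (hαw : 0 < αw) (hwγ : αw < γw)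
    (hαS : 0 < αS) (hSγ : αS < γS)
    (hβ : 0 < β) (hβlt : β < (γS * αw - γw * αS) / (γw - αw))
    (hpH0 : 0 < pH) (hpH1 : pH < 1) (j k : ℕ) :
    pH * obsProb κ β cw γw γS (j+1) k /
      (pH * obsProb κ β cw γw γS (j+1) k + (1 - pH) * obsProb κ β cw αw αS (j+1) k) <
    pH * obsProb κ β cw γw γS j k /
      (pH * obsProb κ β cw γw γS j k + (1 - pH) * obsProb κ β cw αw αS j k) := by
  have hγ : 0 < cw * γw := by nlinarith
  have hα : 0 < cw * αw := by positivity
  have hγS : 0 < γS := by linarith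
  have hPγ (n : ℕ) := obsProb_pos hκ hβ hγ hγS n k
  have hPα (n : ℕ) := obsProb_pos hκ hβ hα hαS n k
  refine posterior_lt_of_mul_lt hpH0 hpH1 (hPγ _) (hPα _) (hPγ _) (hPα _) ?_
  rw [obsProb_succ_left hκ (by positivity), obsProb_succ_left hκ (by positivity)]
  have hc : 0 < obsProb κ β cw γw γS j k * obsProb κ β cw αw αS j k *
      (cw * (κ + (j + k : ℕ)) / (j + 1)) := mul_pos (mul_pos (hPγ j) (hPα j)) (by positivity)
  linarith [mul_lt_mul_of_pos_left
    (weak_success_factor_lt hcw hαw hwγ hαS hSγ hβ hβlt) hc]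

theorem improvable_evidence_paradox (κ β cw αw γw αS γS pH : ℝ)
    (hκ : 0 < κ) (hcw : 0 < cw)
    (hαw : 0 < αw) (hwγ : αw < γw) (hγw1 : γw < 1)
    (hαS : 0 < αS) (hSγ : αS < γS) (hγS1 : γS < 1)
    (hstr : γw / αw < γS / αS) (hwk : 1 < γw / αw)
    (hβ : 0 < β) (hβlt : β < (γS * αw - γw * αS) / (γw - αw))
    (hpH0 : 0 < pH) (hpH1 : pH < 1) (j k : ℕ) :
    pH * obsProb κ β cw γw γS (j+1) k /
      (pH * obsProb κ β cw γw γS (j+1) k + (1 - pH) * obsProb κ β cw αw αS (j+1) k) <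
    pH * obsProb κ β cw γw γS j k /
      (pH * obsProb κ β cw γw γS j k + (1 - pH) * obsProb κ β cw αw αS j k) :=
  improvable_evidence_paradox_general κ β cw αw γw αS γS pH hκ hcw hαw hwγ hαS hSγ hβ hβlt hpH0 hpH1
    j k
end

section
/- Fix positive reals α_w < γ_w, α_S < γ_S with γ_S/α_S > γ_w/α_w, c_w > 0, and a nonnegative integer m. Then there exists C₀ > 0 such that for all C > C₀, γ_w/α_w < ((γ_S + c_w γ_w)/(α_S + c_w α_w)) · (Γ_ℓ(m+2, C(α_S + c_w α_w)) Γ_ℓ(m+1, C(γ_S + c_w γ_w))) / (Γ_ℓ(m+1, C(α_S + c_w α_w)) Γ_ℓ(m+2, C(γ_S + c_w γ_w))), where Γ_ℓ(b, a) = ∫₀^a e^{-x} x^{b-1} dx. -/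
/-
As `C → ∞` every lower incomplete gamma factor tends to the complete value `Γ(b) > 0`, so the
ratio of the four factors tends to `1` and the right-hand side tends to the mediant
`(γS + cw γw) / (αS + cw αw)`. Since `γw / αw < γS / αS`, this mediant lies strictly above
`γw / αw`, and a strict inequality with the limit holds for all large `C`.
-/

open Real

/-- Lower incomplete gamma function `Γ_ℓ(b, a) = ∫₀^a e^{-x} x^{b-1} dx`. -/
noncomputable def lowerGamma (b : ℝ) (a : ℝ) : ℝ :=
  ∫ x in (0:ℝ)..a, Real.exp (-x) * x ^ (b - 1)

open Filter Topology

theorem tendsto_lowerGamma_atTop {b : ℝ} (hb : 0 < b) :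
    Tendsto (lowerGamma b) atTop (𝓝 (Gamma b)) := by
  rw [Gamma_eq_integral hb]
  exact MeasureTheory.intervalIntegral_tendsto_integral_Ioi 0 (GammaIntegral_convergent hb)
    tendsto_id

theorem tendsto_lowerGamma_cross_ratio {b b' k l : ℝ} (hb : 0 < b) (hb' : 0 < b')
    (hk : 0 < k) (hl : 0 < l) :
    Tendsto (fun C : ℝ => lowerGamma b' (C * k) * lowerGamma b (C * l) /
        (lowerGamma b (C * k) * lowerGamma b' (C * l))) atTop (𝓝 1) := by
  have hlim : ∀ {β c : ℝ}, 0 < β → 0 < c →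
      Tendsto (fun C : ℝ => lowerGamma β (C * c)) atTop (𝓝 (Gamma β)) := fun hβ hc =>
    (tendsto_lowerGamma_atTop hβ).comp (tendsto_id.atTop_mul_const hc)
  have hΓ : Gamma b * Gamma b' ≠ 0 := (mul_pos (Gamma_pos_of_pos hb) (Gamma_pos_of_pos hb')).ne'
  have key := ((hlim hb' hk).mul (hlim hb hl)).div ((hlim hb hk).mul (hlim hb' hl)) hΓ
  rwa [mul_comm (Gamma b'), div_self hΓ] at key

theorem div_lt_add_mul_div_add_mul {a a' g g' c : ℝ} (ha : 0 < a) (ha' : 0 < a') (hc : 0 ≤ c)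
    (h : g / a < g' / a') : g / a < (g' + c * g) / (a' + c * a) := by
  rw [div_lt_div_iff₀ ha ha'] at h
  rw [div_lt_div_iff₀ ha (by positivity)]
  nlinarith

theorem uniform_prior_paradox_inequality (αw γw αS γS cw : ℝ) (m : ℕ)
    (hαw : 0 < αw) (hwγ : αw < γw) (hαS : 0 < αS) (hSγ : αS < γS) (hcw : 0 < cw)
    (hstr : γw / αw < γS / αS) :
    ∃ C₀ > (0:ℝ), ∀ C > C₀,
      γw / αw < ((γS + cw * γw) / (αS + cw * αw)) *
        (lowerGamma ((m:ℝ) + 2) (C * (αS + cw * αw)) *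
          lowerGamma ((m:ℝ) + 1) (C * (γS + cw * γw))) /
        (lowerGamma ((m:ℝ) + 1) (C * (αS + cw * αw)) *
          lowerGamma ((m:ℝ) + 2) (C * (γS + cw * γw))) := by
  have hA : 0 < αS + cw * αw := by positivity
  have hG : 0 < γS + cw * γw := by
    have : 0 < γw := hαw.trans hwγ
    have : 0 < γS := hαS.trans hSγ
    positivity
  have hratio := tendsto_lowerGamma_cross_ratio (b := (m:ℝ) + 1) (b' := (m:ℝ) + 2)
    (by positivity) (by positivity) hA hG
  have hlim := hratio.const_mul ((γS + cw * γw) / (αS + cw * αw))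
  rw [mul_one] at hlim
  have hmediant := div_lt_add_mul_div_add_mul hαw hαS hcw.le hstr
  obtain ⟨C₀, hC₀, hC⟩ :=
    (atTop_basis_Ioi' 0).eventually_iff.mp (hlim.eventually (eventually_gt_nhds hmediant))
  refine ⟨C₀, hC₀, fun C hC' => ?_⟩
  simpa only [mul_div_assoc] using hC hC'
end

section
/- For 0 < α < γ ≤ 1, c_w > 0, β > 0, the quantity (γ/α)·((β + α_S)(β + α_S + c_w α)) / ((β + γ_S)(β + γ_S + c_w γ)) with 0 < α_S < γ_S ≤ 1 is strictly increasing in β. -/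
/-!
The Bayes factor is the positive constant `γ / α` times the two factors
`(β + αS) / (β + γS)` and `(β + αS + cw α) / (β + γS + cw γ)`. A factor `(β + a) / (β + b)` with
`a < b` equals `1 - (b - a) / (β + b)`, so it is strictly increasing for `β > -b` and positive
for `β > -a`; a product of nonnegative strictly increasing functions is strictly increasing.
-/

open Set

theorem StrictMonoOn.mul_of_nonneg {ι M₀ : Type*} [Preorder ι] [MulZeroClass M₀] [PartialOrder M₀]
    [PosMulStrictMono M₀] [MulPosStrictMono M₀] {f g : ι → M₀} {s : Set ι}
    (hf : StrictMonoOn f s) (hg : StrictMonoOn g s)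
    (hf₀ : ∀ x ∈ s, 0 ≤ f x) (hg₀ : ∀ x ∈ s, 0 ≤ g x) :
    StrictMonoOn (fun x ↦ f x * g x) s :=
  fun _ hx _ hy h ↦ mul_lt_mul'' (hf hx hy h) (hg hx hy h) (hf₀ _ hx) (hg₀ _ hx)

section AddDivAdd

variable {K : Type*} [Field K] [LinearOrder K] [IsStrictOrderedRing K] {a b : K}

theorem strictMonoOn_add_div_add (hab : a < b) :
    StrictMonoOn (fun x ↦ (x + a) / (x + b)) (Ioi (-b)) := by
  intro x hx y hy hxy
  have hxb : 0 < x + b := neg_lt_iff_pos_add.mp hx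
  have hyb : 0 < y + b := neg_lt_iff_pos_add.mp hy
  rw [div_lt_div_iff₀ hxb hyb]
  nlinarith [mul_pos (sub_pos.2 hxy) (sub_pos.2 hab)]

theorem add_div_add_pos (hab : a < b) {x : K} (hxa : 0 < x + a) : 0 < (x + a) / (x + b) :=
  div_pos hxa (hxa.trans (add_lt_add_right hab x))

end AddDivAdd

theorem bayes_factor_strictMonoOn_general (α γ αS γS cw : ℝ)
    (hα : 0 < α) (hαγ : α < γ)
    (hαS : 0 < αS) (hSγ : αS < γS) (hcw : 0 < cw) :
    StrictMonoOn (fun β : ℝ =>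
      (γ / α) * ((β + αS) * (β + αS + cw * α)) / ((β + γS) * (β + γS + cw * γ)))
      (Set.Ioi 0) := by
  have hγ : 0 < γ := hα.trans hαγ
  have hweak : αS + cw * α < γS + cw * γ := by gcongr
  have hstrongMono : StrictMonoOn (fun β ↦ (β + αS) / (β + γS)) (Ioi 0) :=
    (strictMonoOn_add_div_add hSγ).mono (Ioi_subset_Ioi (by linarith))
  have hweakMono :
      StrictMonoOn (fun β ↦ (β + (αS + cw * α)) / (β + (γS + cw * γ))) (Ioi 0) :=
    (strictMonoOn_add_div_add hweak).mono (Ioi_subset_Ioi (by linarith [mul_pos hcw hγ]))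
  have hprod := hstrongMono.mul_of_nonneg hweakMono
    (fun β hβ ↦ (add_div_add_pos hSγ (add_pos hβ hαS)).le)
    (fun β hβ ↦ (add_div_add_pos hweak (add_pos hβ (by positivity))).le)
  refine ((strictMono_mul_left_of_pos (div_pos hγ hα)).comp_strictMonoOn hprod).congr
    fun β _ ↦ ?_
  simp only [Function.comp_apply, ← add_assoc]
  rw [mul_div_assoc, mul_div_mul_comm]

theorem bayes_factor_strictMonoOn (α γ αS γS cw : ℝ)
    (hα : 0 < α) (hαγ : α < γ) (hγ1 : γ ≤ 1)
    (hαS : 0 < αS) (hSγ : αS < γS) (hγS1 : γS ≤ 1) (hcw : 0 < cw) :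
    StrictMonoOn (fun β : ℝ =>
      (γ / α) * ((β + αS) * (β + αS + cw * α)) / ((β + γS) * (β + γS + cw * γ)))
      (Set.Ioi 0) :=
  bayes_factor_strictMonoOn_general α γ αS γS cw hα hαγ hαS hSγ hcw
end
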